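/- For all integers k ≥ 2 and n ≥ 0, the number of Schröder paths from (0,0) to (n,n) all of whose lattice points (x,y) satisfy y − x ≤ k−2 equals |S_{n+1}(1243, 2143, 12…k)|, where 12…k denotes the identity permutation of length k. -/

import Mathlib

/-- `π` contains the pattern `σ`. -/
def PContains {k n : ℕ} (σ : Equiv.Perm (Fin k)) (π : Equiv.Perm (Fin n)) : Prop :=
  ∃ f : Fin k → Fin n, StrictMono f ∧ ∀ a b : Fin k, π (f a) < π (f b) ↔ σ a < σ b

/-- `π` avoids the pattern `σ`. -/
def PAvoids {k n : ℕ} (σ : Equiv.Perm (Fin k)) (π : Equiv.Perm (Fin n)) : Prop :=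
  ¬ PContains σ π

/-- The pattern 1243 (in one-line notation, 1-based). -/
def p1243 : Equiv.Perm (Fin 4) := ⟨![0, 1, 3, 2], ![0, 1, 3, 2], by decide, by decide⟩

/-- The pattern 2143 (in one-line notation, 1-based). -/
def p2143 : Equiv.Perm (Fin 4) := ⟨![1, 0, 3, 2], ![1, 0, 3, 2], by decide, by decide⟩

/-- `π` avoids both 1243 and 2143. -/
def AvoidsBoth {n : ℕ} (π : Equiv.Perm (Fin n)) : Prop :=
  PAvoids p1243 π ∧ PAvoids p2143 π

/-- `τ_k(π)`: the number of increasing subsequences of length `k` in `π`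
(with the convention `τ_0 = 0`). -/
noncomputable def tauPerm (k : ℕ) {n : ℕ} (π : Equiv.Perm (Fin n)) : ℕ :=
  if k = 0 then 0 else
    Nat.card {f : Fin k → Fin n // StrictMono f ∧ StrictMono (fun a => π (f a))}

/-- The number of occurrences (subsequences of type `σ`) of the pattern `σ` in `π`. -/
noncomputable def numOcc {k n : ℕ} (σ : Equiv.Perm (Fin k)) (π : Equiv.Perm (Fin n)) : ℕ :=
  Nat.card {f : Fin k → Fin n // StrictMono f ∧ ∀ a b : Fin k, π (f a) < π (f b) ↔ σ a < σ b}


/-- A step of a lattice path: north, east, or diagonal. -/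
inductive Step : Type where
  | N : Step
  | E : Step
  | D : Step
deriving DecidableEq

/-- A word over `{N, E, D}` is a Schröder path when it has equally many `N`s and `E`s
and every prefix has at least as many `N`s as `E`s. -/
def IsSchroder (w : List Step) : Prop :=
  w.count Step.N = w.count Step.E ∧
  ∀ p : List Step, p <+: w → p.count Step.E ≤ p.count Step.N

/-- Helper for `tauPath`: sum of `binom(ht(s), k-1)` over east and diagonal steps,
where `h` is the current height. -/
def tauAux (k : ℕ) : ℕ → List Step → ℕ
  | _, [] => 0
  | h, Step.N :: w => tauAux k (h + 1) w
  | h, Step.E :: w => Nat.choose h (k - 1) + tauAux k (h - 1) w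
  | h, Step.D :: w => Nat.choose h (k - 1) + tauAux k h w

/-- `τ_k` of a Schröder path: `binom(0,k-1) + Σ_s binom(ht(s),k-1)` over east and
diagonal steps `s`, with the convention `τ_0 = 0`. -/
def tauPath (k : ℕ) (w : List Step) : ℕ :=
  if k = 0 then 0 else Nat.choose 0 (k - 1) + tauAux k 0 w

/-!
Both sides satisfy the same recursion. Write `a_h(n)` for the number of paths of height at most
`h` with `n` east or diagonal steps. A nonempty path starts with `D`, or splits at its first
return to the diagonal as `N u E v` with `u` of height at most `h - 1` and `v` of height at most
`h`, so `a_{h+1}(n+1) = a_{h+1}(n) + ∑_{i ≤ n} a_h(i) a_{h+1}(n-i)`, while `a_0(n) = a_h(0) = 1`.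

Write a permutation of `{0, …, m}` as `A m B`. If `A` is nonempty with smallest entry `a`,
avoiding 1243 and 2143 forces every other entry of `A` above every entry of `B`; then the
permutation avoids 1243, 2143 and `12…k` exactly when `A` (standardized) avoids 1243, 2143 and
`12…(k-1)` and `a B` avoids 1243, 2143 and `12…k`. This gives the same recursion for the
number of such permutations of length `n + 1`, with `k = h + 2`.
-/

open scoped List

/-- A subsequence `a b c d` with `a, b < d < c`, that is, an occurrence of 1243 or of 2143. -/
def Contains1243Or2143 (l : List ℕ) : Prop :=
  ∃ a b c d : ℕ, [a, b, c, d] <+ l ∧ a < d ∧ b < d ∧ d < c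

def ContainsIncreasing (k : ℕ) (l : List ℕ) : Prop :=
  ∃ s, s <+ l ∧ s.length = k ∧ s.Pairwise (· < ·)

def IsAvoider (k : ℕ) (l : List ℕ) : Prop :=
  ¬ Contains1243Or2143 l ∧ ¬ ContainsIncreasing k l

section ListPatterns

variable {k M a b : ℕ} {l l' A B : List ℕ}

theorem Contains1243Or2143.mono (h : Contains1243Or2143 l) (hl : l <+ l') :
    Contains1243Or2143 l' :=
  let ⟨a, b, c, d, hs, hlt⟩ := h; ⟨a, b, c, d, hs.trans hl, hlt⟩

theorem ContainsIncreasing.mono (h : ContainsIncreasing k l) (hl : l <+ l') :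
    ContainsIncreasing k l' :=
  let ⟨s, hs, hlt⟩ := h; ⟨s, hs.trans hl, hlt⟩

theorem ContainsIncreasing.of_succ : ContainsIncreasing (k + 1) l → ContainsIncreasing k l :=
  fun ⟨s, hs, hlen, hs_inc⟩ =>
    ⟨s.take k, (s.take_sublist k).trans hs, by simp [hlen], hs_inc.sublist (s.take_sublist k)⟩

theorem contains1243Or2143_cons_iff (hM : ∀ x ∈ l, x < M) :
    Contains1243Or2143 (M :: l) ↔ Contains1243Or2143 l := by
  refine ⟨fun ⟨p, q, c, d, hs, hpd, hqd, hdc⟩ => ?_, (·.mono (l.sublist_cons_self M))⟩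
  rcases List.sublist_cons_iff.mp hs with hs | ⟨t, ht, hs⟩
  · exact ⟨p, q, c, d, hs, hpd, hqd, hdc⟩
  · obtain ⟨rfl, rfl⟩ := List.cons.inj ht
    exact absurd (hM d (hs.subset (by simp))) hpd.not_gt

theorem containsIncreasing_cons_iff (hk : 2 ≤ k) (hM : ∀ x ∈ l, x < M) :
    ContainsIncreasing k (M :: l) ↔ ContainsIncreasing k l := by
  refine ⟨fun ⟨s, hs, hlen, hs_inc⟩ => ?_, (·.mono (l.sublist_cons_self M))⟩
  rcases List.sublist_cons_iff.mp hs with hs | ⟨t, rfl, ht⟩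
  · exact ⟨s, hs, hlen, hs_inc⟩
  · obtain ⟨x, t, rfl⟩ : ∃ x t', t = x :: t' :=
      List.exists_cons_of_length_pos (by simp at hlen; omega)
    exact absurd (hM x (ht.subset (by simp))) (List.rel_of_pairwise_cons hs_inc (by simp)).not_gt

theorem pair_sublist_or_pair_sublist (ha : a ∈ l) (hb : b ∈ l) (hab : a ≠ b) :
    [a, b] <+ l ∨ [b, a] <+ l := by
  obtain ⟨s, t, rfl⟩ := List.append_of_mem ha
  rcases List.mem_append.mp hb with hb | hb
  · exact Or.inr (by simpa using (List.singleton_sublist.mpr hb).append (by simp : [a] <+ a :: t))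
  · rcases List.mem_cons.mp hb with rfl | hb
    · exact absurd rfl hab
    · exact Or.inl (((List.singleton_sublist.mpr hb).cons_cons a).trans
        (List.sublist_append_right s _))

theorem eq_of_mem_of_lt_of_not_contains (hBM : ∀ y ∈ B, y < M) (haA : a ∈ A)
    (hamin : ∀ x ∈ A, a ≤ x) (h : ¬ Contains1243Or2143 (A ++ M :: B)) :
    ∀ x ∈ A, ∀ y ∈ B, x < y → x = a := by
  intro x hx y hy hxy
  by_contra hxa
  have hax : a < x := (hamin x hx).lt_of_ne' hxa
  have hMy : [M, y] <+ M :: B := (List.singleton_sublist.mpr hy).cons_cons M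
  rcases pair_sublist_or_pair_sublist haA hx (Ne.symm hxa) with hs | hs
  · exact h ⟨a, x, M, y, by simpa using hs.append hMy, hax.trans hxy, hxy, hBM y hy⟩
  · exact h ⟨x, a, M, y, by simpa using hs.append hMy, hxy, hax.trans hxy, hBM y hy⟩

theorem contains1243Or2143_append_cons_iff (hAM : ∀ x ∈ A, x < M) (hBM : ∀ y ∈ B, y < M)
    (hA : A.Nodup) (haA : a ∈ A) (hsep : ∀ x ∈ A, ∀ y ∈ B, x < y → x = a) :
    Contains1243Or2143 (A ++ M :: B) ↔ Contains1243Or2143 A ∨ Contains1243Or2143 (a :: B) := by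
  refine ⟨fun ⟨p, q, c, d, hs, hpd, hqd, hdc⟩ => ?_, fun h => h.elim
    (·.mono (List.sublist_append_left A _))
    (·.mono (by simpa using (List.singleton_sublist.mpr haA).append (B.sublist_cons_self M)))⟩
  have hle : ∀ x ∈ A ++ M :: B, x ≤ M := by
    simp only [List.mem_append, List.mem_cons]
    rintro x (hx | rfl | hx)
    exacts [(hAM x hx).le, le_rfl, (hBM x hx).le]
  have hdM : d < M := hdc.trans_le (hle c (hs.subset (by simp)))
  -- two entries of `A` below an entry of `B` would both be `a`
  have hpq : [p, q] <+ A → d ∈ B → False := fun hpqA hd => by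
    simpa [hsep p (hpqA.subset (by simp)) d hd hpd, hsep q (hpqA.subset (by simp)) d hd hqd]
      using hA.sublist hpqA
  obtain ⟨s, t, hst, hsA, htB⟩ := List.sublist_append_iff.mp hs
  have hdB : d ∈ t → d ∈ B := fun hd => (List.mem_cons.mp (htB.subset hd)).resolve_left hdM.ne
  rcases s with _ | ⟨_, _ | ⟨_, _ | ⟨_, _ | ⟨_, _ | ⟨_, _⟩⟩⟩⟩⟩ <;>
    simp only [List.nil_append, List.cons_append, List.cons.injEq, List.nil_eq,
      reduceCtorEq, and_false] at hst
  · subst hst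
    exact Or.inr (Contains1243Or2143.mono ⟨p, q, c, d, htB.of_cons_of_ne (hpd.trans hdM).ne,
      hpd, hqd, hdc⟩ (B.sublist_cons_self a))
  · obtain ⟨rfl, rfl⟩ := hst
    have htB := htB.of_cons_of_ne (hqd.trans hdM).ne
    obtain rfl := hsep _ (hsA.subset (by simp)) d (htB.subset (by simp)) hpd
    exact Or.inr ⟨_, q, c, d, htB.cons_cons _, hpd, hqd, hdc⟩
  · obtain ⟨rfl, rfl, rfl⟩ := hst
    exact (hpq hsA (hdB (by simp))).elim
  · obtain ⟨rfl, rfl, rfl, rfl⟩ := hst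
    exact (hpq ((by simp : [p, q] <+ [p, q, c]).trans hsA) (hdB (by simp))).elim
  · obtain ⟨rfl, rfl, rfl, rfl, rfl⟩ := hst
    exact Or.inl ⟨p, q, c, d, hsA, hpd, hqd, hdc⟩

theorem containsIncreasing_append_cons_iff (hAM : ∀ x ∈ A, x < M) (hBM : ∀ y ∈ B, y < M)
    (haA : a ∈ A) (hsep : ∀ x ∈ A, ∀ y ∈ B, x < y → x = a) :
    ContainsIncreasing (k + 1) (A ++ M :: B) ↔
      ContainsIncreasing k A ∨ ContainsIncreasing (k + 1) (a :: B) := by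
  have haB : a :: B <+ A ++ M :: B := by
    simpa using (List.singleton_sublist.mpr haA).append (B.sublist_cons_self M)
  constructor
  · rintro ⟨s', hs', hlen, hinc⟩
    obtain ⟨s, t, rfl, hsA, htB⟩ := List.sublist_append_iff.mp hs'
    obtain ⟨hs_inc, ht_inc, hst⟩ := List.pairwise_append.mp hinc
    rcases List.sublist_cons_iff.mp htB with htB | ⟨t, rfl, htB'⟩
    · rcases t with _ | ⟨y, t⟩
      · exact Or.inl (ContainsIncreasing.of_succ ⟨s, hsA, by simpa using hlen, hs_inc⟩)
      · have hs_a : ∀ x ∈ s, x = a := fun x hx =>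
          hsep x (hsA.subset hx) y (htB.subset (by simp)) (hst x hx y (by simp))
        rcases s with _ | ⟨x, _ | ⟨x', s⟩⟩
        · exact Or.inr (ContainsIncreasing.mono ⟨y :: t, htB, by simpa using hlen, ht_inc⟩
            (B.sublist_cons_self a))
        · obtain rfl := hs_a x (by simp)
          exact Or.inr ⟨x :: y :: t, htB.cons_cons x, by simpa using hlen, hinc⟩
        · have hxx' : x < x' := List.rel_of_pairwise_cons hs_inc (by simp)
          simp [hs_a x (by simp), hs_a x' (by simp)] at hxx'
    · rcases t with _ | ⟨y, t⟩
      · exact Or.inl ⟨s, hsA, by simpa using hlen, hs_inc⟩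
      · exact absurd (hBM y (htB'.subset (by simp)))
          (List.rel_of_pairwise_cons ht_inc (by simp)).not_gt
  · rintro (⟨s, hs, hlen, hinc⟩ | h)
    · refine ⟨s ++ [M], hs.append (by simp), by simp [hlen], ?_⟩
      exact List.pairwise_append.mpr ⟨hinc, by simp, fun x hx y hy => by
        simpa [List.mem_singleton.mp hy] using hAM x (hs.subset hx)⟩
    · exact h.mono haB

theorem isAvoider_append_cons_iff (hAM : ∀ x ∈ A, x < M) (hBM : ∀ y ∈ B, y < M)
    (hA : A.Nodup) (haA : a ∈ A) (hsep : ∀ x ∈ A, ∀ y ∈ B, x < y → x = a) :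
    IsAvoider (k + 1) (A ++ M :: B) ↔ IsAvoider k A ∧ IsAvoider (k + 1) (a :: B) := by
  simp only [IsAvoider, contains1243Or2143_append_cons_iff hAM hBM hA haA hsep,
    containsIncreasing_append_cons_iff hAM hBM haA hsep]
  tauto

theorem isAvoider_map_iff {f : ℕ → ℕ} (hf : StrictMono f) :
    IsAvoider k (l.map f) ↔ IsAvoider k l := by
  have hcontains : Contains1243Or2143 (l.map f) ↔ Contains1243Or2143 l := by
    refine ⟨fun ⟨a, b, c, d, hs, hlt⟩ => ?_, fun ⟨a, b, c, d, hs, had, hbd, hdc⟩ =>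
      ⟨f a, f b, f c, f d, by simpa using hs.map f, hf had, hf hbd, hf hdc⟩⟩
    obtain ⟨t, ht, hst⟩ := List.sublist_map_iff.mp hs
    rcases t with _ | ⟨a', _ | ⟨b', _ | ⟨c', _ | ⟨d', _ | ⟨_, _⟩⟩⟩⟩⟩ <;>
      simp only [List.map_cons, List.map_nil, List.cons.injEq, List.nil_eq, List.cons_ne_self,
        reduceCtorEq, and_false, and_true] at hst
    obtain ⟨rfl, rfl, rfl, rfl⟩ := hst
    exact ⟨a', b', c', d', ht, by simpa [hf.lt_iff_lt] using hlt⟩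
  have hincreasing : ContainsIncreasing k (l.map f) ↔ ContainsIncreasing k l := by
    refine ⟨fun ⟨s, hs, hlen, hinc⟩ => ?_, fun ⟨s, hs, hlen, hinc⟩ =>
      ⟨s.map f, hs.map f, by simpa using hlen, List.pairwise_map.mpr (hinc.imp (hf ·))⟩⟩
    obtain ⟨t, ht, rfl⟩ := List.sublist_map_iff.mp hs
    exact ⟨t, ht, by simpa using hlen, (List.pairwise_map.mp hinc).imp hf.lt_iff_lt.mp⟩
  simp only [IsAvoider, hcontains, hincreasing]

end ListPatterns

section Arrangements

variable {k m j : ℕ} {l A B σ ρ : List ℕ}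

theorem List.Nodup.length_le_of_forall_lt {n : ℕ} (hl : l.Nodup) (hlt : ∀ x ∈ l, x < n) :
    l.length ≤ n := by
  simpa using (List.subperm_of_subset hl fun x hx => List.mem_range.mpr (hlt x hx)).length_le

theorem List.Nodup.perm_range {n : ℕ} (hl : l.Nodup) (hlen : l.length = n)
    (hlt : ∀ x ∈ l, x < n) : l.Perm (List.range n) :=
  (List.subperm_of_subset hl fun x hx => List.mem_range.mpr (hlt x hx)).perm_of_length_le
    (by simp [hlen])

theorem List.lt_length_of_downward_closed {x : ℕ} (hdown : ∀ x ∈ l, ∀ y ≤ x, y ∈ l)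
    (hx : x ∈ l) : x < l.length := by
  simpa using (List.subperm_of_subset List.nodup_range fun y hy =>
    hdown x hx y (Nat.lt_succ_iff.mp (List.mem_range.mp hy))).length_le

theorem List.exists_map_eq_of_forall_mem_range {α β : Type*} {f : α → β} :
    ∀ {l : List β}, (∀ x ∈ l, ∃ y, f y = x) → ∃ l' : List α, l'.map f = l
  | [], _ => ⟨[], rfl⟩
  | x :: l, h => by
    obtain ⟨y, rfl⟩ := h x (by simp)
    obtain ⟨l', rfl⟩ :=
      List.exists_map_eq_of_forall_mem_range (l := l) fun z hz => h z (by simp [hz])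
    exact ⟨y :: l', rfl⟩

open Classical in
noncomputable def goodLists (k m : ℕ) : Finset (List ℕ) :=
  (List.range m).permutations.toFinset.filter (IsAvoider k)

theorem mem_goodLists : l ∈ goodLists k m ↔ l.Perm (List.range m) ∧ IsAvoider k l := by
  simp [goodLists]

def embedAbove (a s : ℕ) : ℕ → ℕ
  | 0 => a
  | x + 1 => x + 1 + s

theorem strictMono_embedAbove {a s : ℕ} (h : a ≤ s) : StrictMono (embedAbove a s) :=
  strictMono_nat_of_lt_succ fun x => by cases x <;> simp [embedAbove]; omega

/-- Inverse of splitting a list at its maximum `m` as `A ++ m :: B`: here `A` is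
order-isomorphic to `σ`, its smallest entry is `a`, and its other entries lie above `B`. -/
def glue (m : ℕ) (σ : List ℕ) : List ℕ → List ℕ
  | [] => []
  | a :: B => σ.map (embedAbove a B.length) ++ m :: B

theorem forall_mem_map_embedAbove (hσ : σ.Perm (List.range (j + 1))) {a s : ℕ} :
    ∀ x ∈ σ.map (embedAbove a s), x = a ∨ s < x ∧ x < j + 1 + s := by
  simp only [List.forall_mem_map]
  rintro (_ | x) hx
  · simp [embedAbove]
  · have := List.mem_range.mp (hσ.subset hx)
    simp only [embedAbove]
    omega

theorem perm_range_append_cons {a : ℕ} (hA : A.Nodup) (haA : a ∈ A) (hρ : (a :: B).Nodup)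
    (hA_val : ∀ x ∈ A, x = a ∨ B.length < x ∧ x < m) (hρ_val : ∀ y ∈ a :: B, y ≤ B.length)
    (hlen : A.length + B.length = m) : (A ++ m :: B).Perm (List.range (m + 1)) := by
  have hBm : B.length < m := by have := List.length_pos_of_mem haA; omega
  have hB_lt : ∀ y ∈ B, y < m := fun y hy => (hρ_val y (by simp [hy])).trans_lt hBm
  have hA_lt : ∀ x ∈ A, x < m := fun x hx => by
    have := hρ_val a (by simp); rcases hA_val x hx with rfl | h <;> omega
  refine List.Nodup.perm_range (List.nodup_append.mpr ⟨hA, List.nodup_cons.mpr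
    ⟨fun h => (hB_lt m h).false, (List.nodup_cons.mp hρ).2⟩, ?_⟩) (by simp; omega) ?_
  · rintro x hx y hy rfl
    rcases List.mem_cons.mp hy with rfl | hy
    · exact (hA_lt x hx).false
    · rcases hA_val x hx with rfl | h
      · exact (List.nodup_cons.mp hρ).1 hy
      · have := hρ_val x (by simp [hy]); omega
  · simp only [List.mem_append, List.mem_cons]
    rintro x (hx | rfl | hx)
    · have := hA_lt x hx; omega
    · omega
    · have := hB_lt x hx; omega

theorem glue_mem_goodLists (hj : j < m) (hσ : σ ∈ goodLists (k + 1) (j + 1))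
    (hρ : ρ ∈ goodLists (k + 2) (m - j)) : glue m σ ρ ∈ goodLists (k + 2) (m + 1) := by
  obtain ⟨hσ, hσ_av⟩ := mem_goodLists.mp hσ
  obtain ⟨hρ, hρ_av⟩ := mem_goodLists.mp hρ
  obtain ⟨a, B, rfl⟩ : ∃ a B, ρ = a :: B :=
    List.exists_cons_of_length_pos (by simp [hρ.length_eq]; omega)
  have hlen : B.length + j + 1 = m := by have := hρ.length_eq; simp at this; omega
  have hρ_val : ∀ y ∈ a :: B, y ≤ B.length := fun y hy => by
    have := List.mem_range.mp (hρ.subset hy); omega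
  have hf := strictMono_embedAbove (hρ_val a (by simp))
  set A := σ.map (embedAbove a B.length)
  have hA_val : ∀ x ∈ A, x = a ∨ B.length < x ∧ x < m := fun x hx => by
    have := forall_mem_map_embedAbove hσ x hx; omega
  have hA_nodup : A.Nodup := (hσ.nodup_iff.mpr List.nodup_range).map hf.injective
  have hAM : ∀ x ∈ A, x < m := fun x hx => by
    have := hρ_val a (by simp); rcases hA_val x hx with rfl | h <;> omega
  have hBM : ∀ y ∈ B, y < m := fun y hy => by have := hρ_val y (by simp [hy]); omega
  have hsep : ∀ x ∈ A, ∀ y ∈ B, x < y → x = a := fun x hx y hy hxy =>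
    (hA_val x hx).resolve_right fun h => by have := hρ_val y (by simp [hy]); omega
  have haA : a ∈ A := List.mem_map.mpr ⟨0, hσ.symm.subset (List.mem_range.mpr (by omega)), rfl⟩
  exact mem_goodLists.mpr ⟨perm_range_append_cons hA_nodup haA
      (hρ.nodup_iff.mpr List.nodup_range) hA_val hρ_val (by simp [hσ.length_eq]; omega),
    (isAvoider_append_cons_iff hAM hBM hA_nodup haA hsep).mpr
      ⟨(isAvoider_map_iff hf).mpr hσ_av, hρ_av⟩⟩

theorem forall_lt_of_perm_range_append_cons (hl : (A ++ m :: B).Perm (List.range (m + 1))) :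
    (∀ x ∈ A, x < m) ∧ ∀ y ∈ B, y < m := by
  have hlt : ∀ x ∈ A ++ m :: B, x < m + 1 := fun x hx => List.mem_range.mp (hl.subset hx)
  have hnodup := List.nodup_middle.mp (hl.nodup_iff.mpr List.nodup_range)
  simp only [List.nodup_cons, List.mem_append, not_or] at hnodup
  exact ⟨fun x hx => (Nat.lt_succ_iff.mp (hlt x (by simp [hx]))).lt_of_ne fun h =>
      hnodup.1.1 (h ▸ hx),
    fun y hy => (Nat.lt_succ_iff.mp (hlt y (by simp [hy]))).lt_of_ne fun h => hnodup.1.2 (h ▸ hy)⟩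

theorem nodup_cons_of_perm_range_append_cons (hl : (A ++ m :: B).Perm (List.range (m + 1)))
    {a : ℕ} (haA : a ∈ A) : (a :: B).Nodup := by
  obtain ⟨-, hmB, hdisj⟩ := List.nodup_append.mp (hl.nodup_iff.mpr List.nodup_range)
  exact List.nodup_cons.mpr ⟨fun h => hdisj a haA a (by simp [h]) rfl, (List.nodup_cons.mp hmB).2⟩

theorem values_of_perm_range_append_cons (hl : (A ++ m :: B).Perm (List.range (m + 1)))
    {a : ℕ} (haA : a ∈ A) (hamin : ∀ x ∈ A, a ≤ x) (hsep : ∀ x ∈ A, ∀ y ∈ B, x < y → x = a) :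
    (∀ y ∈ a :: B, y ≤ B.length) ∧ ∀ x ∈ A, x ≠ a → B.length < x := by
  obtain ⟨hAM, hBM⟩ := forall_lt_of_perm_range_append_cons hl
  have hdisj := (List.nodup_append.mp (hl.nodup_iff.mpr List.nodup_range)).2.2
  have habove : ∀ x ∈ A, x ≠ a → ∀ y ∈ a :: B, y < x := by
    intro x hx hxa y hy
    rcases List.mem_cons.mp hy with rfl | hy
    · exact (hamin x hx).lt_of_ne' hxa
    · refine lt_of_not_ge fun hxy => ?_
      rcases hxy.lt_or_eq with hxy | rfl
      · exact hxa (hsep x hx y hy hxy)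
      · exact hdisj x hx x (by simp [hy]) rfl
  have hρM : ∀ y ∈ a :: B, y < m := by simpa [hAM a haA] using hBM
  refine ⟨fun y hy => Nat.lt_succ_iff.mp (List.lt_length_of_downward_closed
    (fun v hv w hwv => ?_) hy), fun x hx hxa =>
      (nodup_cons_of_perm_range_append_cons hl haA).length_le_of_forall_lt (habove x hx hxa)⟩
  have hw : w ∈ A ∨ w = m ∨ w ∈ B := by
    simpa using hl.symm.subset (List.mem_range.mpr (by have := hρM v hv; omega))
  rcases hw with hw | rfl | hw
  · by_cases hwa : w = a
    · simp [hwa]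
    · exact absurd hwv (habove w hw hwa v hv).not_ge
  · exact absurd hwv (hρM _ hv).not_ge
  · exact List.mem_cons_of_mem a hw

theorem exists_glue_eq (hl : A ++ m :: B ∈ goodLists (k + 2) (m + 1)) (hA : A ≠ []) :
    ∃ j < m, ∃ σ ∈ goodLists (k + 1) (j + 1), ∃ ρ ∈ goodLists (k + 2) (m - j),
      glue m σ ρ = A ++ m :: B := by
  obtain ⟨hl, hl_av⟩ := mem_goodLists.mp hl
  have hlen : A.length + B.length = m := by have := hl.length_eq; simp at this; omega
  have hA_nodup := (List.nodup_append.mp (hl.nodup_iff.mpr List.nodup_range)).1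
  obtain ⟨hAM, hBM⟩ := forall_lt_of_perm_range_append_cons hl
  obtain ⟨a, haA, hamin⟩ : ∃ a ∈ A, ∀ x ∈ A, a ≤ x := by
    simpa using A.toFinset.exists_min_image id (List.toFinset_nonempty_iff A |>.mpr hA)
  have hsep := eq_of_mem_of_lt_of_not_contains hBM haA hamin hl_av.1
  obtain ⟨hA_av, hρ_av⟩ := (isAvoider_append_cons_iff hAM hBM hA_nodup haA hsep).mp hl_av
  obtain ⟨hρ_le, hA_gt⟩ := values_of_perm_range_append_cons hl haA hamin hsep
  have hf := strictMono_embedAbove (hρ_le a (by simp))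
  obtain ⟨σ, rfl⟩ : ∃ σ : List ℕ, σ.map (embedAbove a B.length) = A := by
    refine List.exists_map_eq_of_forall_mem_range fun x hx => ?_
    by_cases hxa : x = a
    · exact ⟨0, hxa.symm⟩
    · exact ⟨x - B.length - 1 + 1, by have := hA_gt x hx hxa; simp only [embedAbove]; omega⟩
  have hσ_len : σ.length - 1 + 1 = σ.length := by
    have := List.length_pos_of_ne_nil hA; simp only [List.length_map] at this; omega
  simp only [List.length_map] at hlen
  refine ⟨σ.length - 1, by omega, σ, mem_goodLists.mpr ⟨?_, (isAvoider_map_iff hf).mp hA_av⟩,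
    a :: B, mem_goodLists.mpr ⟨?_, hρ_av⟩, rfl⟩
  · refine (List.Nodup.of_map _ hA_nodup).perm_range hσ_len.symm fun x hx => ?_
    have := hAM _ (List.mem_map_of_mem hx)
    cases x <;> simp only [embedAbove] at this <;> omega
  · exact (nodup_cons_of_perm_range_append_cons hl haA).perm_range (by simp; omega)
      fun y hy => by have := hρ_le y hy; omega

theorem cons_mem_goodLists_iff : m :: l ∈ goodLists (k + 2) (m + 1) ↔ l ∈ goodLists (k + 2) m := by
  have hperm : (m :: l).Perm (List.range (m + 1)) ↔ l.Perm (List.range m) := by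
    have := List.perm_append_singleton m (List.range m)
    rw [List.range_succ]
    exact ⟨fun h => (List.perm_cons m).mp (h.trans this),
      fun h => ((List.perm_cons m).mpr h).trans this.symm⟩
  simp only [mem_goodLists, hperm]
  refine and_congr_right fun hl => ?_
  have hlt : ∀ x ∈ l, x < m := fun x hx => List.mem_range.mp (hl.subset hx)
  simp only [IsAvoider, contains1243Or2143_cons_iff hlt,
    containsIncreasing_cons_iff (by omega : 2 ≤ k + 2) hlt]

theorem exists_glue_eq_append (hj : j < m) (hσ : σ ∈ goodLists (k + 1) (j + 1))
    (hρ : ρ ∈ goodLists (k + 2) (m - j)) :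
    ∃ a B, ρ = a :: B ∧ glue m σ ρ = σ.map (embedAbove a B.length) ++ m :: B ∧
      m ∉ σ.map (embedAbove a B.length) ∧ m ∉ B := by
  have hnodup := (mem_goodLists.mp (glue_mem_goodLists hj hσ hρ)).1.nodup_iff.mpr List.nodup_range
  obtain ⟨a, B, rfl⟩ : ∃ a B, ρ = a :: B :=
    List.exists_cons_of_length_pos (by simp [(mem_goodLists.mp hρ).1.length_eq]; omega)
  simp only [glue, List.nodup_middle, List.nodup_cons, List.mem_append, not_or] at hnodup
  exact ⟨a, B, rfl, rfl, hnodup.1⟩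

theorem glue_inj {j' : ℕ} {σ' ρ' : List ℕ} (hj : j < m) (hσ : σ ∈ goodLists (k + 1) (j + 1))
    (hρ : ρ ∈ goodLists (k + 2) (m - j)) (hj' : j' < m) (hσ' : σ' ∈ goodLists (k + 1) (j' + 1))
    (hρ' : ρ' ∈ goodLists (k + 2) (m - j')) (h : glue m σ ρ = glue m σ' ρ') :
    j = j' ∧ σ = σ' ∧ ρ = ρ' := by
  obtain ⟨a, B, rfl, hglue, hmA, hmB⟩ := exists_glue_eq_append hj hσ hρ
  obtain ⟨a', B', rfl, hglue', -, -⟩ := exists_glue_eq_append hj' hσ' hρ'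
  obtain ⟨hA, -, rfl⟩ := (List.append_cons_inj_of_notMem hmA hmB).mp (hglue ▸ hglue' ▸ h)
  have hjj' : j = j' := by
    simpa [(mem_goodLists.mp hσ).1.length_eq, (mem_goodLists.mp hσ').1.length_eq] using
      congrArg List.length hA
  subst hjj'
  obtain ⟨hρ, -⟩ := mem_goodLists.mp hρ
  obtain ⟨hρ', -⟩ := mem_goodLists.mp hρ'
  have haa' : a' = a := by
    have ha' : a' ∈ a :: B := hρ.symm.subset (hρ'.subset (by simp))
    exact (List.mem_cons.mp ha').resolve_right
      (List.nodup_cons.mp (hρ'.nodup_iff.mpr List.nodup_range)).1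
  subst haa'
  have ha : a' ≤ B.length := by
    have hlen := hρ.length_eq
    have := List.mem_range.mp (hρ.subset (by simp : a' ∈ a' :: B))
    simp only [List.length_cons, List.length_range] at hlen
    omega
  exact ⟨rfl, List.map_injective_iff.mpr (strictMono_embedAbove ha).injective hA, rfl⟩

theorem glue_ne_cons (hj : j < m) (hσ : σ ∈ goodLists (k + 1) (j + 1))
    (hρ : ρ ∈ goodLists (k + 2) (m - j)) : glue m σ ρ ≠ m :: l := by
  obtain ⟨a, B, rfl, hglue, hmA, hmB⟩ := exists_glue_eq_append hj hσ hρ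
  intro h
  have hA := ((List.append_cons_inj_of_notMem hmA hmB).mp (hglue ▸ h : _ = [] ++ m :: l)).1
  simpa [(mem_goodLists.mp hσ).1.length_eq] using congrArg List.length hA

end Arrangements

section Counting

open Finset

theorem card_disjSum_sigma_product {α β γ : Type*} (s : Finset α) (t : Finset ℕ)
    (f : ℕ → Finset β) (g : ℕ → Finset γ) :
    #(s.disjSum (t.sigma fun i => f i ×ˢ g i)) = #s + ∑ i ∈ t, #(f i) * #(g i) := by
  simp [card_disjSum, card_sigma, card_product]

theorem card_goodLists_succ (k m : ℕ) :
    #(goodLists (k + 2) (m + 1)) = #(goodLists (k + 2) m) +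
      ∑ j ∈ range m, #(goodLists (k + 1) (j + 1)) * #(goodLists (k + 2) (m - j)) := by
  rw [← card_disjSum_sigma_product]
  refine (card_nbij (Sum.elim (m :: ·) fun x => glue m x.2.1 x.2.2) ?_ ?_ ?_).symm
  · rintro (l | ⟨j, σ, ρ⟩) h <;>
      simp only [mem_coe, inl_mem_disjSum, inr_mem_disjSum, mem_sigma, mem_product, mem_range,
        Sum.elim_inl, Sum.elim_inr] at h ⊢
    · exact cons_mem_goodLists_iff.mpr h
    · exact glue_mem_goodLists h.1 h.2.1 h.2.2
  · rintro (l | ⟨j, σ, ρ⟩) h (l' | ⟨j', σ', ρ'⟩) h' heq <;>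
      simp only [mem_coe, inl_mem_disjSum, inr_mem_disjSum, mem_sigma, mem_product, mem_range,
        Sum.elim_inl, Sum.elim_inr] at h h' heq
    · rw [List.cons.inj heq |>.2]
    · exact absurd heq.symm (glue_ne_cons h'.1 h'.2.1 h'.2.2)
    · exact absurd heq (glue_ne_cons h.1 h.2.1 h.2.2)
    · obtain ⟨rfl, rfl, rfl⟩ := glue_inj h.1 h.2.1 h.2.2 h'.1 h'.2.1 h'.2.2 heq
      rfl
  · intro l hl
    have hm : m ∈ l := (mem_goodLists.mp hl).1.symm.subset (List.mem_range.mpr m.lt_succ_self)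
    obtain ⟨A, B, rfl⟩ := List.append_of_mem hm
    rcases eq_or_ne A [] with rfl | hA
    · exact ⟨Sum.inl B, by simpa using cons_mem_goodLists_iff.mp hl, rfl⟩
    · obtain ⟨j, hj, σ, hσ, ρ, hρ, hglue⟩ := exists_glue_eq hl hA
      exact ⟨Sum.inr ⟨j, σ, ρ⟩, by simpa using ⟨hj, hσ, hρ⟩, hglue⟩

theorem card_goodLists_zero (k : ℕ) : #(goodLists (k + 1) 0) = 1 := by
  refine card_eq_one.mpr ⟨[], eq_singleton_iff_unique_mem.mpr ⟨mem_goodLists.mpr ⟨by simp, ?_, ?_⟩,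
    fun l hl => by simpa using (mem_goodLists.mp hl).1⟩⟩
  · rintro ⟨a, b, c, d, hs, -⟩
    simpa using hs.length_le
  · rintro ⟨s, hs, hlen, -⟩
    simp [List.sublist_nil.mp hs] at hlen

theorem card_goodLists_one_succ (m : ℕ) : #(goodLists 1 (m + 1)) = 0 := by
  refine card_eq_zero.mpr (eq_empty_of_forall_notMem fun l hl => ?_)
  obtain ⟨hl, -, hinc⟩ := mem_goodLists.mp hl
  obtain ⟨x, l, rfl⟩ := List.exists_cons_of_length_pos (l := l) (by simp [hl.length_eq])
  exact hinc ⟨[x], by simp, rfl, by simp⟩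

theorem card_goodLists_two (m : ℕ) : #(goodLists 2 m) = 1 := by
  induction m with
  | zero => exact card_goodLists_zero 1
  | succ m ih => simp [card_goodLists_succ 0 m, ih, card_goodLists_one_succ]

end Counting

section OneLineNotation

variable {k m : ℕ}

def oneLine (π : Equiv.Perm (Fin m)) : List ℕ := List.ofFn fun i => (π i : ℕ)

theorem oneLine_injective : Function.Injective (oneLine (m := m)) := fun _ _ h =>
  Equiv.ext fun i => Fin.ext (congrFun (List.ofFn_injective h) i)

theorem oneLine_perm_range (π : Equiv.Perm (Fin m)) : (oneLine π).Perm (List.range m) :=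
  List.Nodup.perm_range (List.nodup_ofFn.mpr fun _ _ h => π.injective (Fin.ext h))
    (by simp [oneLine]) (by simp [oneLine])

theorem exists_oneLine_eq {l : List ℕ} (hl : l.Perm (List.range m)) :
    ∃ π : Equiv.Perm (Fin m), oneLine π = l := by
  have hlen : l.length = m := by simpa using hl.length_eq
  have hlt : ∀ i : Fin m, l[i.1]'(hlen ▸ i.2) < m := fun i =>
    List.mem_range.mp (hl.subset (List.getElem_mem _))
  let e : Fin m → Fin m := fun i => ⟨l[i.1]'(hlen ▸ i.2), hlt i⟩
  have he : Function.Injective e := fun i j h =>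
    Fin.ext ((hl.nodup_iff.mpr List.nodup_range).getElem_inj_iff.mp (Fin.mk.inj h))
  exact ⟨Equiv.ofBijective e he.bijective_of_finite,
    List.ext_getElem (by simp [oneLine, hlen]) fun n h₁ h₂ => by simp [oneLine, e]⟩

theorem exists_sublist_ofFn_iff {α : Type*} {g : Fin m → α} {P : List α → Prop} :
    (∃ s, s <+ List.ofFn g ∧ s.length = k ∧ P s) ↔
      ∃ f : Fin k → Fin m, StrictMono f ∧ P (List.ofFn (g ∘ f)) := by
  simp only [List.sublist_iff_exists_fin_orderEmbedding_get_eq]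
  constructor
  · rintro ⟨s, ⟨F, hF⟩, rfl, hP⟩
    refine ⟨fun i => Fin.cast List.length_ofFn (F i), fun i j hij => F.strictMono hij, ?_⟩
    convert hP
    exact List.ext_get (by simp) fun n _ h => by rw [List.get_ofFn, hF ⟨n, h⟩, List.get_ofFn]; rfl
  · rintro ⟨f, hf, hP⟩
    refine ⟨List.ofFn (g ∘ f), ⟨OrderEmbedding.ofStrictMono
      (fun i => Fin.cast List.length_ofFn.symm (f (Fin.cast List.length_ofFn i)))
      fun i j hij => hf hij, fun i => by simp; rfl⟩, by simp, hP⟩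

theorem pContains_iff {σ : Equiv.Perm (Fin k)} {π : Equiv.Perm (Fin m)} :
    PContains σ π ↔ ∃ f : Fin k → Fin m, StrictMono f ∧ StrictMono (π ∘ f ∘ σ.symm) := by
  refine exists_congr fun f => and_congr_right fun _ => ⟨fun h a b hab => ?_, fun h a b => ?_⟩
  · simpa using (h (σ.symm a) (σ.symm b)).mpr (by simpa using hab)
  · simpa using (h.lt_iff_lt (a := σ a) (b := σ b))

theorem containsIncreasing_oneLine_iff (π : Equiv.Perm (Fin m)) :
    ContainsIncreasing k (oneLine π) ↔ PContains (Equiv.refl (Fin k)) π := by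
  rw [ContainsIncreasing, oneLine, exists_sublist_ofFn_iff, pContains_iff]
  simp only [List.pairwise_ofFn, Equiv.refl_symm, Equiv.coe_refl, Function.comp_id]
  rfl

theorem contains1243Or2143_oneLine_iff (π : Equiv.Perm (Fin m)) :
    Contains1243Or2143 (oneLine π) ↔ PContains p1243 π ∨ PContains p2143 π := by
  have hpattern : Contains1243Or2143 (oneLine π) ↔ ∃ s, s <+ oneLine π ∧ s.length = 4 ∧
      ∃ a b c d : ℕ, s = [a, b, c, d] ∧ a < d ∧ b < d ∧ d < c :=
    ⟨fun ⟨a, b, c, d, hs, h⟩ => ⟨_, hs, rfl, a, b, c, d, rfl, h⟩,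
      fun ⟨_, hs, _, a, b, c, d, hs', h⟩ => ⟨a, b, c, d, hs' ▸ hs, h⟩⟩
  rw [hpattern, oneLine, exists_sublist_ofFn_iff]
  simp only [pContains_iff, ← exists_or, ← and_or_left]
  refine exists_congr fun f => and_congr_right fun hf => ?_
  have h01 : (π (f 0) : ℕ) ≠ π (f 1) := fun h => (hf (by decide : (0 : Fin 4) < 1)).ne
    (π.injective (Fin.ext h))
  rw [show ⇑p1243.symm = ![0, 1, 3, 2] from rfl, show ⇑p2143.symm = ![1, 0, 3, 2] from rfl]
  simp [List.ofFn_succ, Fin.strictMono_iff_lt_succ, Fin.forall_fin_succ]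
  omega

theorem isAvoider_oneLine_iff (π : Equiv.Perm (Fin m)) :
    IsAvoider k (oneLine π) ↔ AvoidsBoth π ∧ PAvoids (Equiv.refl (Fin k)) π := by
  simp only [IsAvoider, AvoidsBoth, PAvoids, contains1243Or2143_oneLine_iff,
    containsIncreasing_oneLine_iff, not_or]

theorem card_avoiders_eq_card_goodLists (k m : ℕ) :
    Nat.card {π : Equiv.Perm (Fin m) // AvoidsBoth π ∧ PAvoids (Equiv.refl (Fin k)) π} =
      (goodLists k m).card := by
  rw [← Nat.card_eq_finsetCard]
  refine Nat.card_eq_of_bijective (fun π => ⟨oneLine π.1, mem_goodLists.mpr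
    ⟨oneLine_perm_range _, (isAvoider_oneLine_iff _).mpr π.2⟩⟩)
    ⟨fun π π' h => Subtype.ext (oneLine_injective (congrArg Subtype.val h)), fun ⟨l, hl⟩ => ?_⟩
  obtain ⟨hl, hav⟩ := mem_goodLists.mp hl
  obtain ⟨π, rfl⟩ := exists_oneLine_eq hl
  exact ⟨⟨π, (isAvoider_oneLine_iff π).mp hav⟩, rfl⟩

end OneLineNotation

theorem List.forall_prefix_cons_iff {α : Type*} {P : List α → Prop} {a : α} {w : List α} :
    (∀ p, p <+: a :: w → P p) ↔ P [] ∧ ∀ p, p <+: w → P (a :: p) := by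
  simp only [List.prefix_cons_iff]
  exact ⟨fun h => ⟨h [] (Or.inl rfl), fun p hp => h _ (Or.inr ⟨p, rfl, hp⟩)⟩,
    fun h p => by rintro (rfl | ⟨p, rfl, hp⟩); exacts [h.1, h.2 p hp]⟩

theorem List.forall_prefix_append_iff {α : Type*} {P : List α → Prop} {u v : List α} :
    (∀ p, p <+: u ++ v → P p) ↔ (∀ p, p <+: u → P p) ∧ ∀ q, q <+: v → P (u ++ q) := by
  refine ⟨fun h => ⟨fun p hp => h p (hp.trans (u.prefix_append v)),
    fun q hq => h _ ((List.prefix_append_right_inj u).mpr hq)⟩, fun h p hp => ?_⟩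
  rcases List.prefix_or_prefix_of_prefix hp (u.prefix_append v) with hpu | ⟨q, rfl⟩
  · exact h.1 p hpu
  · exact h.2 q ((List.prefix_append_right_inj u).mp hp)

instance : Fintype Step :=
  ⟨⟨[Step.N, Step.E, Step.D], by decide⟩, fun x => by cases x <;> decide⟩

section SchroderPaths

variable {h n : ℕ} {u v w : List Step}

theorem length_eq_count_add_count_add_count (w : List Step) :
    w.length = w.count Step.N + w.count Step.E + w.count Step.D := by
  induction w with
  | nil => rfl
  | cons x w ih => cases x <;> simp [ih] <;> omega

theorem finite_setOf_schroder (h n : ℕ) :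
    {w : List Step | IsSchroder w ∧ w.count Step.E + w.count Step.D = n ∧
      ∀ p : List Step, p <+: w → p.count Step.N ≤ p.count Step.E + h}.Finite :=
  (List.finite_length_le Step (2 * n)).subset fun w ⟨⟨hbal, _⟩, hn, _⟩ => by
    simp only [Set.mem_ofPred_eq, length_eq_count_add_count_add_count]; omega

noncomputable def schroderPaths (h n : ℕ) : Finset (List Step) :=
  (finite_setOf_schroder h n).toFinset

theorem mem_schroderPaths : w ∈ schroderPaths h n ↔ IsSchroder w ∧
    w.count Step.E + w.count Step.D = n ∧
      ∀ p : List Step, p <+: w → p.count Step.N ≤ p.count Step.E + h := by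
  simp [schroderPaths]

theorem isSchroder_of_mem_schroderPaths (hw : w ∈ schroderPaths h n) : IsSchroder w :=
  (mem_schroderPaths.mp hw).1

theorem not_isSchroder_append_E_cons (hu : u.count Step.N = u.count Step.E) :
    ¬ IsSchroder (u ++ Step.E :: v) := fun hw => by
  have := hw.2 (u ++ [Step.E]) ((List.prefix_append_right_inj u).mpr (by simp))
  simp [hu] at this

theorem mem_schroderPaths_D_cons_iff :
    Step.D :: w ∈ schroderPaths h (n + 1) ↔ w ∈ schroderPaths h n := by
  simp only [mem_schroderPaths, IsSchroder, List.forall_prefix_cons_iff, List.count_cons,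
    List.count_nil, beq_iff_eq, reduceCtorEq, ↓reduceIte, add_zero, zero_le, true_and]
  exact and_congr_right fun _ => and_congr_left fun _ => by omega

theorem mem_schroderPaths_N_cons_iff (hu : IsSchroder u) :
    Step.N :: (u ++ Step.E :: v) ∈ schroderPaths (h + 1) n ↔
      ∃ i j, i + j + 1 = n ∧ u ∈ schroderPaths h i ∧ v ∈ schroderPaths (h + 1) j := by
  obtain ⟨hbal, hnonneg⟩ := hu
  simp only [mem_schroderPaths, IsSchroder, List.forall_prefix_cons_iff,
    List.forall_prefix_append_iff, List.count_cons, List.count_append, List.count_nil,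
    beq_iff_eq, reduceCtorEq, ↓reduceIte, add_zero, BEq.rfl, Std.le_refl, true_and, zero_add,
    le_add_iff_nonneg_left, zero_le, Order.add_one_le_iff, ↓existsAndEq]
  constructor
  · rintro ⟨⟨hb, -, -, hv⟩, hn, hu, -, hv'⟩
    exact ⟨by omega, ⟨⟨hbal, hnonneg⟩, fun p hp => by have := hu p hp; omega⟩,
      ⟨by omega, fun p hp => by have := hv p hp; omega⟩, fun p hp => by have := hv' p hp; omega⟩
  · rintro ⟨hn, ⟨-, hu⟩, ⟨hb, hv⟩, hv'⟩
    exact ⟨⟨by omega, fun p hp => by have := hnonneg p hp; omega, by omega,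
      fun p hp => by have := hv p hp; omega⟩, by omega, fun p hp => by have := hu p hp; omega,
      by omega, fun p hp => by have := hv' p hp; omega⟩

theorem exists_eq_append_E_cons_isSchroder :
    ∀ w : List Step, (∃ p, p <+: w ∧ p.count Step.N < p.count Step.E) →
      ∃ u v, w = u ++ Step.E :: v ∧ IsSchroder u := by
  intro w
  induction w using List.reverseRecOn with
  | nil => simp
  | append_singleton w x ih =>
    intro ⟨p, hp, hlt⟩
    -- either a prefix of `w` already dips below the diagonal, or `w ++ [x]` is the first one
    by_cases hw : ∃ p, p <+: w ∧ p.count Step.N < p.count Step.E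
    · obtain ⟨u, v, rfl, hu⟩ := ih hw
      exact ⟨u, v ++ [x], by simp, hu⟩
    · simp only [not_exists, not_and, not_lt] at hw
      rcases List.prefix_concat_iff.mp hp with rfl | hp
      · have := hw w (List.prefix_refl w)
        cases x <;> simp only [List.count_append, List.count_cons, List.count_nil, beq_iff_eq,
          reduceCtorEq, ↓reduceIte, add_zero, zero_add] at hlt <;> try omega
        exact ⟨w, [], rfl, by omega, hw⟩
      · exact absurd hlt (hw p hp).not_gt

theorem eq_of_isSchroder_of_append_E_cons_eq {u' v' : List Step} (hu : IsSchroder u)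
    (hu' : IsSchroder u') (h : u ++ Step.E :: v = u' ++ Step.E :: v') : u = u' ∧ v = v' := by
  rcases List.append_eq_append_iff.mp h with ⟨_ | ⟨x, t⟩, rfl, ht⟩ | ⟨_ | ⟨x, t⟩, rfl, ht⟩
  · simp_all
  · obtain ⟨rfl, -⟩ := List.cons.inj ht
    exact (not_isSchroder_append_E_cons hu.1 hu').elim
  · simp_all
  · obtain ⟨rfl, -⟩ := List.cons.inj ht
    exact (not_isSchroder_append_E_cons hu'.1 hu).elim

theorem exists_eq_D_cons_or_N_cons (hw : w ∈ schroderPaths h (n + 1)) :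
    (∃ w', w = Step.D :: w') ∨ ∃ w', w = Step.N :: w' := by
  obtain ⟨hw, hn, -⟩ := mem_schroderPaths.mp hw
  rcases w with _ | ⟨_ | _ | _, w'⟩
  · simp at hn
  · exact Or.inr ⟨w', rfl⟩
  · simpa using hw.2 [Step.E] (by simp)
  · exact Or.inl ⟨w', rfl⟩

end SchroderPaths

section Counting

open Finset

theorem card_schroderPaths_succ (h n : ℕ) :
    #(schroderPaths (h + 1) (n + 1)) = #(schroderPaths (h + 1) n) +
      ∑ i ∈ range (n + 1), #(schroderPaths h i) * #(schroderPaths (h + 1) (n - i)) := by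
  rw [← card_disjSum_sigma_product]
  refine (card_nbij (Sum.elim (Step.D :: ·) fun x => Step.N :: (x.2.1 ++ Step.E :: x.2.2))
    ?_ ?_ ?_).symm
  · rintro (w | ⟨i, u, v⟩) hw <;>
      simp only [mem_coe, inl_mem_disjSum, inr_mem_disjSum, mem_sigma, mem_product, mem_range,
        Sum.elim_inl, Sum.elim_inr] at hw ⊢
    · exact mem_schroderPaths_D_cons_iff.mpr hw
    · exact (mem_schroderPaths_N_cons_iff (isSchroder_of_mem_schroderPaths hw.2.1)).mpr
        ⟨i, n - i, by omega, hw.2⟩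
  · rintro (w | ⟨i, u, v⟩) hw (w' | ⟨i', u', v'⟩) hw' heq <;>
      simp only [mem_coe, inl_mem_disjSum, inr_mem_disjSum, mem_sigma, mem_product, mem_range,
        Sum.elim_inl, Sum.elim_inr, List.cons.injEq, reduceCtorEq, false_and, true_and]
        at hw hw' heq
    · rw [heq]
    · obtain ⟨rfl, rfl⟩ := eq_of_isSchroder_of_append_E_cons_eq
        (isSchroder_of_mem_schroderPaths hw.2.1) (isSchroder_of_mem_schroderPaths hw'.2.1) heq
      obtain rfl : i = i' := (mem_schroderPaths.mp hw.2.1).2.1.symm.trans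
        (mem_schroderPaths.mp hw'.2.1).2.1
      rfl
  · intro w hw
    rcases exists_eq_D_cons_or_N_cons hw with ⟨w, rfl⟩ | ⟨w, rfl⟩
    · exact ⟨Sum.inl w, by simpa using mem_schroderPaths_D_cons_iff.mp hw, rfl⟩
    · obtain ⟨u, v, rfl, hu⟩ := exists_eq_append_E_cons_isSchroder w
        ⟨w, List.prefix_refl w, by have := (mem_schroderPaths.mp hw).1.1; simp at this; omega⟩
      obtain ⟨i, j, hij, hu, hv⟩ := (mem_schroderPaths_N_cons_iff hu).mp hw
      obtain rfl : j = n - i := by omega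
      exact ⟨Sum.inr ⟨i, u, v⟩, by simpa using ⟨by omega, hu, hv⟩, rfl⟩

theorem card_schroderPaths_zero_right (h : ℕ) : #(schroderPaths h 0) = 1 := by
  refine card_eq_one.mpr ⟨[], eq_singleton_iff_unique_mem.mpr ⟨?_, fun w hw => ?_⟩⟩
  · exact mem_schroderPaths.mpr ⟨⟨rfl, by simp⟩, rfl, by simp⟩
  · obtain ⟨⟨hbal, -⟩, hn, -⟩ := mem_schroderPaths.mp hw
    exact List.eq_nil_of_length_eq_zero (by rw [length_eq_count_add_count_add_count]; omega)

theorem card_schroderPaths_zero (n : ℕ) : #(schroderPaths 0 n) = 1 := by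
  induction n with
  | zero => exact card_schroderPaths_zero_right 0
  | succ n ih =>
    refine (card_nbij (Step.D :: ·) (fun w hw => mem_schroderPaths_D_cons_iff.mpr hw)
      (fun _ _ _ _ h => List.cons_injective h) fun w hw => ?_).symm.trans ih
    rcases exists_eq_D_cons_or_N_cons hw with ⟨w, rfl⟩ | ⟨w, rfl⟩
    · exact ⟨w, mem_schroderPaths_D_cons_iff.mp hw, rfl⟩
    · simpa using (mem_schroderPaths.mp hw).2.2 [Step.N] (by simp)

theorem card_schroderPaths_eq_card_goodLists (h n : ℕ) :
    #(schroderPaths h n) = #(goodLists (h + 2) (n + 1)) := by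
  induction h generalizing n with
  | zero => rw [card_schroderPaths_zero, card_goodLists_two]
  | succ h ih =>
    induction n using Nat.strong_induction_on with
    | _ n ihn =>
      rcases n with _ | n
      · simp [card_schroderPaths_zero_right, card_goodLists_succ (h + 1) 0, card_goodLists_zero]
      · rw [card_schroderPaths_succ, card_goodLists_succ (h + 1) (n + 1), ihn n n.lt_succ_self]
        refine congrArg _ (sum_congr rfl fun i hi => ?_)
        rw [ih, ihn (n - i) (by omega), show n - i + 1 = n + 1 - i by
          have := mem_range.mp hi; omega]

end Counting

/-- For k ≥ 2 and n ≥ 0, the number of Schröder paths from (0,0) to (n,n)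
staying weakly below the line y − x = k−2 (every prefix has at most k−2 more N's than
E's) equals |S_{n+1}(1243, 2143, 12…k)|, where 12…k is the identity of length k. -/
theorem stmt_6 (k n : ℕ) (hk : 2 ≤ k) :
    Nat.card {w : List Step // IsSchroder w ∧ w.count Step.E + w.count Step.D = n ∧
        ∀ p : List Step, p <+: w → p.count Step.N ≤ p.count Step.E + (k - 2)} =
      Nat.card {π : Equiv.Perm (Fin (n + 1)) //
        AvoidsBoth π ∧ PAvoids (Equiv.refl (Fin k)) π} := by
  obtain ⟨h, rfl⟩ : ∃ h, k = h + 2 := ⟨k - 2, by omega⟩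
  rw [Nat.add_sub_cancel, card_avoiders_eq_card_goodLists,
    ← card_schroderPaths_eq_card_goodLists, ← Nat.card_eq_finsetCard]
  exact Nat.card_congr (Equiv.subtypeEquivRight fun _ => mem_schroderPaths).symm
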